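/- arXiv:2502.08228 — 2 statements merged into one kernel-verified Lean document; each statement's English description precedes it below -/
import Mathlib

section
/- Let (p*_1,…,p*_κ) with 0 ≤ p*_1 ≤ … ≤ p*_κ be an optimal solution to the monotone price-setting subproblem. Let q_1 < q_2 < … < q_L with L ≤ κ be the distinct price levels, i.e., {p*_1,…,p*_κ} = {q_1,…,q_L}, and for l ∈ {1,…,L} set I_l = {k ∈ {1,…,κ} : p*_k = q_l}. Then for every l ∈ {1,…,L} with ⋃_{k∈I_l} D_k ≠ ∅, the price level q_l is a weighted median of the pooled values (r_d) with weights (t_d) over d ∈ ⋃_{k∈I_l} D_k. -/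
open scoped Classical

/-- `p` is a weighted median of the values `r d` with weights `t d` over `d ∈ D`. -/
def IsWeightedMedian {ι : Type*} (D : Finset ι) (r : ι → ℝ) (t : ι → ℕ) (p : ℝ) : Prop :=
  (∑ d ∈ D.filter (fun d => r d < p), (t d : ℝ)) ≤ (∑ d ∈ D, (t d : ℝ)) / 2 ∧
    (∑ d ∈ D.filter (fun d => p < r d), (t d : ℝ)) ≤ (∑ d ∈ D, (t d : ℝ)) / 2

/-- Objective of the price-setting subproblem. -/
noncomputable def psObj {ι : Type*} (κ : ℕ) (Dk : Fin κ → Finset ι) (r : ι → ℝ)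
    (t : ι → ℕ) (p : Fin κ → ℝ) : ℝ :=
  ∑ k : Fin κ, ∑ d ∈ Dk k, (t d : ℝ) * |r d - p k|

/-!
Moving all prices of a level `v` to a value `c` changes the objective by the change of the
pooled weighted absolute deviation `∑ t_d |r_d - c|` of that level. Take for `c` the largest
pooled reference price or price below `v`: the moved price list is still feasible, and since no
reference price lies strictly between `c` and `v`, the deviation grows by exactly
`(v - c) (W_{≥ v} - W_{< v})`, which optimality forces to be nonnegative. This is the first
weighted-median inequality; moving up to the next value above `v` gives the second.
-/

open Finset

noncomputable def weightedAbsDev {ι : Type*} (D : Finset ι) (r w : ι → ℝ) (c : ℝ) : ℝ :=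
  ∑ d ∈ D, w d * |r d - c|

section WeightedAbsDev

variable {ι : Type*} {D : Finset ι} {r w : ι → ℝ} {c v : ℝ}

lemma weightedAbsDev_eq_add_of_forall_le (hcv : c ≤ v) (hgap : ∀ d ∈ D, r d < v → r d ≤ c) :
    weightedAbsDev D r w c = weightedAbsDev D r w v +
      (v - c) * (∑ d ∈ D.filter (fun d => ¬ r d < v), w d -
        ∑ d ∈ D.filter (fun d => r d < v), w d) := by
  have hpt : ∀ d ∈ D, w d * |r d - c| =
      w d * |r d - v| + (v - c) * (if r d < v then -w d else w d) := by
    intro d hd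
    split_ifs with hdv
    · rw [abs_of_nonpos (by linarith [hgap d hd hdv]), abs_of_neg (by linarith)]
      ring
    · have hvd := not_lt.1 hdv
      rw [abs_of_nonneg (by linarith), abs_of_nonneg (by linarith)]
      ring
  rw [weightedAbsDev, sum_congr rfl hpt, sum_add_distrib, ← mul_sum, sum_ite, sum_neg_distrib,
    weightedAbsDev]
  ring

lemma sum_filter_lt_le_half_of_weightedAbsDev_le (hcv : c < v)
    (hgap : ∀ d ∈ D, r d < v → r d ≤ c)
    (hle : weightedAbsDev D r w v ≤ weightedAbsDev D r w c) :
    ∑ d ∈ D.filter (fun d => r d < v), w d ≤ (∑ d ∈ D, w d) / 2 := by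
  rw [weightedAbsDev_eq_add_of_forall_le hcv.le hgap] at hle
  have hslope : 0 ≤ ∑ d ∈ D.filter (fun d => ¬ r d < v), w d -
      ∑ d ∈ D.filter (fun d => r d < v), w d :=
    (mul_nonneg_iff_of_pos_left (sub_pos.2 hcv)).1 (by linarith)
  linarith [sum_filter_add_sum_filter_not D (fun d => r d < v) w]

lemma sum_filter_gt_le_half_of_weightedAbsDev_le (hvc : v < c)
    (hgap : ∀ d ∈ D, v < r d → c ≤ r d)
    (hle : weightedAbsDev D r w v ≤ weightedAbsDev D r w c) :
    ∑ d ∈ D.filter (fun d => v < r d), w d ≤ (∑ d ∈ D, w d) / 2 := by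
  have hneg : ∀ x, weightedAbsDev D (fun d => -r d) w (-x) = weightedAbsDev D r w x := by
    intro x
    simp only [weightedAbsDev, neg_sub_neg, abs_sub_comm]
  have := sum_filter_lt_le_half_of_weightedAbsDev_le (r := fun d => -r d)
    (neg_lt_neg hvc) (fun d hd hdv => neg_le_neg (hgap d hd (neg_lt_neg_iff.1 hdv)))
    (by rwa [hneg, hneg])
  simpa only [neg_lt_neg_iff] using this

end WeightedAbsDev

noncomputable def levelUpdate {α : Type*} (p : α → ℝ) (v c : ℝ) : α → ℝ :=
  fun k => if p k = v then c else p k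

lemma monotone_levelUpdate {α : Type*} [Preorder α] {p : α → ℝ} {v c : ℝ} (hmono : Monotone p)
    (hbelow : ∀ k, p k < v → p k ≤ c) (habove : ∀ k, v < p k → c ≤ p k) :
    Monotone (levelUpdate p v c) := by
  intro a b hab
  have hpab := hmono hab
  simp only [levelUpdate]
  split_ifs with ha hb hb
  · exact le_rfl
  · exact habove b (lt_of_le_of_ne (ha ▸ hpab) (Ne.symm hb))
  · exact hbelow a (lt_of_le_of_ne (hb ▸ hpab) ha)
  · exact hpab

section PriceSetting

variable {ι : Type*} {κ : ℕ} {Dk : Fin κ → Finset ι} {r : ι → ℝ} {t : ι → ℕ}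

lemma psObj_levelUpdate_add (hdisj : ∀ k k' : Fin κ, k ≠ k' → Disjoint (Dk k) (Dk k'))
    (p : Fin κ → ℝ) (v c : ℝ) :
    psObj κ Dk r t (levelUpdate p v c)
      + weightedAbsDev ((univ.filter fun k => p k = v).biUnion Dk) r (fun d => t d) v
    = psObj κ Dk r t p
      + weightedAbsDev ((univ.filter fun k => p k = v).biUnion Dk) r (fun d => t d) c := by
  have hpd : Set.PairwiseDisjoint ((univ.filter fun k => p k = v : Finset (Fin κ)) : Set (Fin κ))
      Dk := fun k _ k' _ h => hdisj k k' h
  simp only [psObj, weightedAbsDev, sum_biUnion hpd]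
  rw [← sum_filter_add_sum_filter_not univ (fun k => p k = v),
    ← sum_filter_add_sum_filter_not univ (fun k => p k = v) (fun k => ∑ d ∈ Dk k, _)]
  have hon : ∀ g : Fin κ → ℝ, ∀ c', (∀ k, p k = v → g k = c') →
      ∑ k ∈ univ.filter (fun k => p k = v), ∑ d ∈ Dk k, (t d : ℝ) * |r d - g k| =
        ∑ k ∈ univ.filter (fun k => p k = v), ∑ d ∈ Dk k, (t d : ℝ) * |r d - c'| :=
    fun g c' hg => sum_congr rfl fun k hk => by rw [hg k (mem_filter.1 hk).2]
  have hoff : ∑ k ∈ univ.filter (fun k => ¬ p k = v),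
      ∑ d ∈ Dk k, (t d : ℝ) * |r d - levelUpdate p v c k| =
        ∑ k ∈ univ.filter (fun k => ¬ p k = v), ∑ d ∈ Dk k, (t d : ℝ) * |r d - p k| :=
    sum_congr rfl fun k hk => by rw [levelUpdate, if_neg (mem_filter.1 hk).2]
  rw [hon (levelUpdate p v c) c fun k hk => if_pos hk, hon p v fun _ hk => hk, hoff]
  ring

variable {p : Fin κ → ℝ} {v : ℝ}

lemma weightedAbsDev_level_le_of_optimal
    (hdisj : ∀ k k' : Fin κ, k ≠ k' → Disjoint (Dk k) (Dk k'))
    (hp0 : ∀ k, 0 ≤ p k) (hmono : Monotone p)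
    (hopt : ∀ q : Fin κ → ℝ, (∀ k, 0 ≤ q k) → Monotone q →
      psObj κ Dk r t p ≤ psObj κ Dk r t q)
    {c : ℝ} (hc0 : 0 ≤ c) (hbelow : ∀ k, p k < v → p k ≤ c) (habove : ∀ k, v < p k → c ≤ p k) :
    weightedAbsDev ((univ.filter fun k => p k = v).biUnion Dk) r (fun d => t d) v ≤
      weightedAbsDev ((univ.filter fun k => p k = v).biUnion Dk) r (fun d => t d) c := by
  have hfeas : ∀ k, 0 ≤ levelUpdate p v c k := fun k => by
    unfold levelUpdate
    split_ifs
    exacts [hc0, hp0 k]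
  have hle := hopt _ hfeas (monotone_levelUpdate hmono hbelow habove)
  linarith [psObj_levelUpdate_add (r := r) (t := t) hdisj p v c]

lemma nonneg_of_mem_biUnion (hr : ∀ k, ∀ d ∈ Dk k, 0 ≤ r d) {s : Finset (Fin κ)} {d : ι}
    (hd : d ∈ s.biUnion Dk) : 0 ≤ r d := by
  obtain ⟨k, -, hdk⟩ := mem_biUnion.1 hd
  exact hr k d hdk

lemma sum_filter_lt_level_le_half (hr : ∀ k, ∀ d ∈ Dk k, 0 ≤ r d)
    (hdisj : ∀ k k' : Fin κ, k ≠ k' → Disjoint (Dk k) (Dk k'))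
    (hp0 : ∀ k, 0 ≤ p k) (hmono : Monotone p)
    (hopt : ∀ q : Fin κ → ℝ, (∀ k, 0 ≤ q k) → Monotone q →
      psObj κ Dk r t p ≤ psObj κ Dk r t q) :
    ∑ d ∈ ((univ.filter fun k => p k = v).biUnion Dk).filter (fun d => r d < v), (t d : ℝ) ≤
      (∑ d ∈ (univ.filter fun k => p k = v).biUnion Dk, (t d : ℝ)) / 2 := by
  set D := (univ.filter fun k => p k = v).biUnion Dk
  rcases (D.filter fun d => r d < v).eq_empty_or_nonempty with hempty | ⟨d₀, hd₀⟩
  · rw [hempty, sum_empty]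
    positivity
  set F := (D.filter fun d => r d < v).image r ∪ (univ.filter fun k => p k < v).image p
  have hF : F.Nonempty := ⟨r d₀, mem_union_left _ (mem_image_of_mem r hd₀)⟩
  have hcF : 0 ≤ F.max' hF ∧ F.max' hF < v := by
    rcases mem_union.1 (F.max'_mem hF) with hc | hc
    · obtain ⟨d, hd, hdc⟩ := mem_image.1 hc
      rw [← hdc]
      exact ⟨nonneg_of_mem_biUnion hr (mem_filter.1 hd).1, (mem_filter.1 hd).2⟩
    · obtain ⟨k, hk, hkc⟩ := mem_image.1 hc
      rw [← hkc]
      exact ⟨hp0 k, (mem_filter.1 hk).2⟩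
  refine sum_filter_lt_le_half_of_weightedAbsDev_le (w := fun d => (t d : ℝ)) hcF.2
    (fun d hd hdv => F.le_max' _ (mem_union_left _ (mem_image_of_mem r (mem_filter.2 ⟨hd, hdv⟩))))
    (weightedAbsDev_level_le_of_optimal hdisj hp0 hmono hopt hcF.1 (fun k hk => ?_)
      (fun k hk => by linarith))
  exact F.le_max' _ (mem_union_right _ (mem_image_of_mem p (mem_filter.2 ⟨mem_univ k, hk⟩)))

lemma sum_filter_gt_level_le_half (hr : ∀ k, ∀ d ∈ Dk k, 0 ≤ r d)
    (hdisj : ∀ k k' : Fin κ, k ≠ k' → Disjoint (Dk k) (Dk k'))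
    (hp0 : ∀ k, 0 ≤ p k) (hmono : Monotone p)
    (hopt : ∀ q : Fin κ → ℝ, (∀ k, 0 ≤ q k) → Monotone q →
      psObj κ Dk r t p ≤ psObj κ Dk r t q) :
    ∑ d ∈ ((univ.filter fun k => p k = v).biUnion Dk).filter (fun d => v < r d), (t d : ℝ) ≤
      (∑ d ∈ (univ.filter fun k => p k = v).biUnion Dk, (t d : ℝ)) / 2 := by
  set D := (univ.filter fun k => p k = v).biUnion Dk
  rcases (D.filter fun d => v < r d).eq_empty_or_nonempty with hempty | ⟨d₀, hd₀⟩
  · rw [hempty, sum_empty]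
    positivity
  set F := (D.filter fun d => v < r d).image r ∪ (univ.filter fun k => v < p k).image p
  have hF : F.Nonempty := ⟨r d₀, mem_union_left _ (mem_image_of_mem r hd₀)⟩
  have hcF : 0 ≤ F.min' hF ∧ v < F.min' hF := by
    rcases mem_union.1 (F.min'_mem hF) with hc | hc
    · obtain ⟨d, hd, hdc⟩ := mem_image.1 hc
      rw [← hdc]
      exact ⟨nonneg_of_mem_biUnion hr (mem_filter.1 hd).1, (mem_filter.1 hd).2⟩
    · obtain ⟨k, hk, hkc⟩ := mem_image.1 hc
      rw [← hkc]
      exact ⟨hp0 k, (mem_filter.1 hk).2⟩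
  refine sum_filter_gt_le_half_of_weightedAbsDev_le (w := fun d => (t d : ℝ)) hcF.2
    (fun d hd hdv => F.min'_le _ (mem_union_left _ (mem_image_of_mem r (mem_filter.2 ⟨hd, hdv⟩))))
    (weightedAbsDev_level_le_of_optimal hdisj hp0 hmono hopt hcF.1 (fun k hk => by linarith)
      (fun k hk => ?_))
  exact F.min'_le _ (mem_union_right _ (mem_image_of_mem p (mem_filter.2 ⟨mem_univ k, hk⟩)))

end PriceSetting

theorem monotone_price_setting_levels_weighted_medians_general {ι : Type*} (κ : ℕ)
    (Dk : Fin κ → Finset ι) (r : ι → ℝ) (t : ι → ℕ)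
    (hr : ∀ k, ∀ d ∈ Dk k, 0 ≤ r d)
    (hdisj : ∀ k k' : Fin κ, k ≠ k' → Disjoint (Dk k) (Dk k'))
    (p : Fin κ → ℝ) (hp0 : ∀ k, 0 ≤ p k) (hmono : Monotone p)
    (hopt : ∀ q : Fin κ → ℝ, (∀ k, 0 ≤ q k) → Monotone q →
      psObj κ Dk r t p ≤ psObj κ Dk r t q)
    (L : ℕ) (q : Fin L → ℝ) :
    ∀ l : Fin L, ((Finset.univ.filter (fun k => p k = q l)).biUnion Dk).Nonempty →
      IsWeightedMedian ((Finset.univ.filter (fun k => p k = q l)).biUnion Dk) r t (q l) := by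
  intro l _
  exact ⟨sum_filter_lt_level_le_half hr hdisj hp0 hmono hopt,
    sum_filter_gt_level_le_half hr hdisj hp0 hmono hopt⟩

/-- For an optimal solution to the monotone price-setting subproblem with distinct price
levels `q 0 < … < q (L-1)`, each price level is a weighted median of the pooled reference
prices of the levels `I_l = {k : p k = q l}` it is used for. -/
theorem monotone_price_setting_levels_weighted_medians {ι : Type*} (κ : ℕ)
    (Dk : Fin κ → Finset ι) (r : ι → ℝ) (t : ι → ℕ)
    (hr : ∀ k, ∀ d ∈ Dk k, 0 ≤ r d) (ht : ∀ k, ∀ d ∈ Dk k, 1 ≤ t d)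
    (hdisj : ∀ k k' : Fin κ, k ≠ k' → Disjoint (Dk k) (Dk k'))
    (p : Fin κ → ℝ) (hp0 : ∀ k, 0 ≤ p k) (hmono : Monotone p)
    (hopt : ∀ q : Fin κ → ℝ, (∀ k, 0 ≤ q k) → Monotone q →
      psObj κ Dk r t p ≤ psObj κ Dk r t q)
    (L : ℕ) (hL : L ≤ κ) (q : Fin L → ℝ) (hq : StrictMono q)
    (hrange : Set.range p = Set.range q) :
    ∀ l : Fin L, ((Finset.univ.filter (fun k => p k = q l)).biUnion Dk).Nonempty →
      IsWeightedMedian ((Finset.univ.filter (fun k => p k = q l)).biUnion Dk) r t (q l) :=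
  monotone_price_setting_levels_weighted_medians_general κ Dk r t hr hdisj p hp0 hmono hopt L q
end

section
/- The optimal values of the multiple-counting and single-counting zone tariff design problems with arbitrary zones are incomparable in general, even on trees: there exists an instance of the zone tariff design problem on a tree with z*_MA < z*_SA (e.g., the path graph on vertices v_1,…,v_4 with one passenger per OD pair, OD pairs (v_1,v_2), (v_2,v_3), (v_3,v_4), (v_1,v_4) with reference prices 1, 2, 2, 3 and N = 2, where z*_MA = 0 < z*_SA), and there exists an instance on a tree with z*_SA < z*_MA (e.g., the path graph on vertices v_1,…,v_5 with one passenger per OD pair, OD pairs (v_1,v_2), (v_2,v_3), (v_2,v_4), (v_3,v_5) with reference prices 1, 2, 2, 3 and N = 5, where z*_SA = 0 < z*_MA). -/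
/-!
Both optimal values are infima of nonnegative objectives, so the value `0` is attained by
exhibiting one partition together with the prices `P k = k`: the zones `{v₁, v₂, v₄}, {v₃}`
(plus `{v₅}` on the longer path) give every OD pair a zone count equal to its reference price.

For the lower bound `1`: if two OD pairs whose reference prices differ by `1` get the same zone
count, they pay the same price, which costs at least `1`. With at most two zones, single counting
sends the three OD pairs with reference prices `1, 2, 3` into `{1, 2}`, so two of them collide.
For multiple counting on the five-vertex path, let `a, b, c, e ∈ {0, 1}` record which of the four
edges cross a zone border; the OD pairs then get the counts `1 + a, 1 + b, 1 + b + c, 1 + c + e`,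
and for every choice some pair other than the two with reference price `2` collides.
-/

open scoped Classical
noncomputable section

/-- A zone partition of the vertex set `V`: nonempty, pairwise disjoint zones covering `V`. -/
def IsZonePartition {V : Type*} (Z : Finset (Finset V)) : Prop :=
  (∀ A ∈ Z, A.Nonempty) ∧ (∀ A ∈ Z, ∀ B ∈ Z, A ≠ B → Disjoint A B) ∧
    ∀ v : V, ∃ A ∈ Z, v ∈ A

/-- `v` and `w` lie in a common zone of `Z`. -/
def SameZone {V : Type*} (Z : Finset (Finset V)) (v w : V) : Prop :=
  ∃ A ∈ Z, v ∈ A ∧ w ∈ A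

/-- Multiple-counting zone function: one plus the number of zone borders crossed along `W`. -/
def sigmaM {V : Type*} (Z : Finset (Finset V)) (W : List V) : ℕ :=
  1 + ((W.zip W.tail).filter (fun p => decide (¬ SameZone Z p.1 p.2))).length

/-- Single-counting zone function: the number of distinct zones met by `W`. -/
def sigmaS {V : Type*} (Z : Finset (Finset V)) (W : List V) : ℕ :=
  (Z.filter (fun A => ∃ v ∈ W, v ∈ A)).card

/-- A zone is connected if the induced subgraph is connected. -/
def ZoneConnected {V : Type*} (G : SimpleGraph V) (A : Finset V) : Prop :=
  (G.induce (A : Set V)).Connected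

/-- Objective value of the zone tariff design problem. -/
def zoneObj {V ι : Type*} (D : Finset ι) (r : ι → ℝ) (t : ι → ℕ) (Wd : ι → List V)
    (σ : Finset (Finset V) → List V → ℕ) (Z : Finset (Finset V)) (P : ℕ → ℝ) : ℝ :=
  ∑ d ∈ D, (t d : ℝ) * |r d - P (σ Z (Wd d))|

/-- Optimal (infimum) objective value over all feasible zone partitions and
nonnegative price functions. -/
def zStar {V ι : Type*} (D : Finset ι) (r : ι → ℝ) (t : ι → ℕ) (Wd : ι → List V)
    (σ : Finset (Finset V) → List V → ℕ) (feas : Finset (Finset V) → Prop) : ℝ :=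
  sInf {x : ℝ | ∃ Z P, feas Z ∧ (∀ k, 0 ≤ P k) ∧ x = zoneObj D r t Wd σ Z P}

/-- The path graph on four vertices. -/
def pathGraph4 : SimpleGraph (Fin 4) :=
  SimpleGraph.fromRel (fun i j => (i : ℕ) + 1 = (j : ℕ))

/-- The path graph on five vertices. -/
def pathGraph5 : SimpleGraph (Fin 5) :=
  SimpleGraph.fromRel (fun i j => (i : ℕ) + 1 = (j : ℕ))

section ZStar

variable {V ι : Type*} {D : Finset ι} {r : ι → ℝ} {t : ι → ℕ} {Wd : ι → List V}
  {σ : Finset (Finset V) → List V → ℕ} {feas : Finset (Finset V) → Prop}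

theorem zoneObj_nonneg (Z : Finset (Finset V)) (P : ℕ → ℝ) : 0 ≤ zoneObj D r t Wd σ Z P :=
  Finset.sum_nonneg fun _ _ => mul_nonneg (Nat.cast_nonneg _) (abs_nonneg _)

theorem abs_sub_le_zoneObj {Z : Finset (Finset V)} (P : ℕ → ℝ) {d d' : ι} (hd : d ∈ D)
    (hd' : d' ∈ D) (htd : 1 ≤ t d) (htd' : 1 ≤ t d') (hσ : σ Z (Wd d) = σ Z (Wd d')) :
    |r d - r d'| ≤ zoneObj D r t Wd σ Z P := by
  rcases eq_or_ne d d' with rfl | hne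
  · simpa using zoneObj_nonneg Z P
  set x := P (σ Z (Wd d'))
  have hterm : ∀ e, 1 ≤ t e → |r e - x| ≤ (t e : ℝ) * |r e - x| := fun e he =>
    le_mul_of_one_le_left (abs_nonneg _) (by exact_mod_cast he)
  calc |r d - r d'| ≤ |r d - x| + |r d' - x| := by
        simpa only [abs_sub_comm x] using abs_sub_le (r d) x (r d')
    _ ≤ (t d : ℝ) * |r d - x| + (t d' : ℝ) * |r d' - x| :=
      add_le_add (hterm d htd) (hterm d' htd')
    _ = ∑ e ∈ {d, d'}, (t e : ℝ) * |r e - P (σ Z (Wd e))| := by rw [Finset.sum_pair hne, hσ]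
    _ ≤ zoneObj D r t Wd σ Z P :=
      Finset.sum_le_sum_of_subset_of_nonneg (Finset.insert_subset hd (by simpa using hd'))
        fun _ _ _ => mul_nonneg (Nat.cast_nonneg _) (abs_nonneg _)

theorem zStar_eq_zero_of_zoneObj_eq_zero {Z : Finset (Finset V)} {P : ℕ → ℝ} (hZ : feas Z)
    (hP : ∀ k, 0 ≤ P k) (h0 : zoneObj D r t Wd σ Z P = 0) : zStar D r t Wd σ feas = 0 := by
  refine le_antisymm (csInf_le ⟨0, ?_⟩ ⟨Z, P, hZ, hP, h0.symm⟩)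
    (le_csInf ⟨0, Z, P, hZ, hP, h0.symm⟩ ?_) <;>
  · rintro _ ⟨Z', P', -, -, rfl⟩
    exact zoneObj_nonneg Z' P'

theorem le_zStar_of_forall_sigma_eq {c : ℝ} (hfeas : ∃ Z, feas Z) (ht : ∀ d ∈ D, 1 ≤ t d)
    (hcoll : ∀ Z, feas Z →
      ∃ d ∈ D, ∃ d' ∈ D, σ Z (Wd d) = σ Z (Wd d') ∧ c ≤ |r d - r d'|) :
    c ≤ zStar D r t Wd σ feas := by
  obtain ⟨Z₀, hZ₀⟩ := hfeas
  refine le_csInf ⟨_, Z₀, 0, hZ₀, fun _ => le_rfl, rfl⟩ ?_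
  rintro _ ⟨Z, P, hZ, -, rfl⟩
  obtain ⟨d, hd, d', hd', hσ, hc⟩ := hcoll Z hZ
  exact hc.trans (abs_sub_le_zoneObj P hd hd' (ht d hd) (ht d' hd') hσ)

end ZStar

section ZoneFunctions

variable {V : Type*} (Z : Finset (Finset V))

@[simp]
theorem sigmaM_singleton (v : V) : sigmaM Z [v] = 1 := by
  simp [sigmaM]

theorem sigmaM_cons_cons (v w : V) (W : List V) :
    sigmaM Z (v :: w :: W) = (if SameZone Z v w then 0 else 1) + sigmaM Z (w :: W) := by
  by_cases h : SameZone Z v w <;> simp [sigmaM, h]; omega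

variable {Z}

theorem one_le_sigmaS (hZ : IsZonePartition Z) {v : V} {W : List V} (hv : v ∈ W) :
    1 ≤ sigmaS Z W := by
  obtain ⟨A, hA, hvA⟩ := hZ.2.2 v
  exact Finset.card_pos.2 ⟨A, Finset.mem_filter.2 ⟨hA, v, hv, hvA⟩⟩

theorem sigmaS_le_card (W : List V) : sigmaS Z W ≤ Z.card :=
  Finset.card_filter_le _ _

end ZoneFunctions

def IsZonePartitionAtMost (N : ℕ) {V : Type*} (Z : Finset (Finset V)) : Prop :=
  IsZonePartition Z ∧ Z.card ≤ N

def refPrices : Fin 4 → ℝ := ![1, 2, 2, 3]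

def odPaths4 : Fin 4 → List (Fin 4) := ![[0, 1], [1, 2], [2, 3], [0, 1, 2, 3]]

def odPaths5 : Fin 4 → List (Fin 5) := ![[0, 1], [1, 2], [1, 2, 3], [2, 3, 4]]

def zones4 : Finset (Finset (Fin 4)) := {{0, 1, 3}, {2}}

def zones5 : Finset (Finset (Fin 5)) := {{0, 1, 3}, {2}, {4}}

theorem isZonePartitionAtMost_zones4 : IsZonePartitionAtMost 2 zones4 := by
  unfold IsZonePartitionAtMost IsZonePartition zones4; decide

theorem isZonePartitionAtMost_zones5 : IsZonePartitionAtMost 5 zones5 := by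
  unfold IsZonePartitionAtMost IsZonePartition zones5; decide

theorem zStar_sigmaM_odPaths4_eq_zero :
    zStar Finset.univ refPrices (fun _ => 1) odPaths4 sigmaM (IsZonePartitionAtMost 2) = 0 := by
  refine zStar_eq_zero_of_zoneObj_eq_zero (Z := zones4) (P := fun k => k)
    isZonePartitionAtMost_zones4 (fun k => k.cast_nonneg) ?_
  simp [zoneObj, Fin.sum_univ_four, odPaths4, refPrices, sigmaM_cons_cons, SameZone, zones4]

theorem zStar_sigmaS_odPaths5_eq_zero :
    zStar Finset.univ refPrices (fun _ => 1) odPaths5 sigmaS (IsZonePartitionAtMost 5) = 0 := by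
  refine zStar_eq_zero_of_zoneObj_eq_zero (Z := zones5) (P := fun k => k)
    isZonePartitionAtMost_zones5 (fun k => k.cast_nonneg) ?_
  simp +decide [zoneObj, Fin.sum_univ_four, odPaths5, refPrices, sigmaS, zones5,
    Finset.filter_insert, Finset.filter_singleton, Finset.card_insert_of_notMem]

theorem one_le_zStar_sigmaS_odPaths4 :
    1 ≤ zStar Finset.univ refPrices (fun _ => 1) odPaths4 sigmaS (IsZonePartitionAtMost 2) := by
  refine le_zStar_of_forall_sigma_eq ⟨_, isZonePartitionAtMost_zones4⟩ (fun _ _ => le_rfl) ?_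
  rintro Z ⟨hZ, hcard⟩
  have hrange : ∀ d, 1 ∈ odPaths4 d → 1 ≤ sigmaS Z (odPaths4 d) ∧ sigmaS Z (odPaths4 d) ≤ 2 :=
    fun d h1 => ⟨one_le_sigmaS hZ h1, (sigmaS_le_card _).trans hcard⟩
  have hcoll : sigmaS Z (odPaths4 0) = sigmaS Z (odPaths4 1) ∨
      sigmaS Z (odPaths4 0) = sigmaS Z (odPaths4 3) ∨
      sigmaS Z (odPaths4 1) = sigmaS Z (odPaths4 3) := by
    have := hrange 0 (by decide); have := hrange 1 (by decide); have := hrange 3 (by decide)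
    omega
  rcases hcoll with h | h | h <;>
    exact ⟨_, Finset.mem_univ _, _, Finset.mem_univ _, h, by simp [refPrices]; norm_num⟩

theorem one_le_zStar_sigmaM_odPaths5 :
    1 ≤ zStar Finset.univ refPrices (fun _ => 1) odPaths5 sigmaM (IsZonePartitionAtMost 5) := by
  refine le_zStar_of_forall_sigma_eq ⟨_, isZonePartitionAtMost_zones5⟩ (fun _ _ => le_rfl) ?_
  intro Z _
  have hcoll : sigmaM Z (odPaths5 0) = sigmaM Z (odPaths5 1) ∨
      sigmaM Z (odPaths5 0) = sigmaM Z (odPaths5 2) ∨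
      sigmaM Z (odPaths5 0) = sigmaM Z (odPaths5 3) ∨
      sigmaM Z (odPaths5 1) = sigmaM Z (odPaths5 3) ∨
      sigmaM Z (odPaths5 2) = sigmaM Z (odPaths5 3) := by
    simp only [odPaths5, Matrix.cons_val, sigmaM_cons_cons, sigmaM_singleton]
    split_ifs <;> omega
  rcases hcoll with h | h | h | h | h <;>
    exact ⟨_, Finset.mem_univ _, _, Finset.mem_univ _, h, by simp [refPrices]; norm_num⟩

/-- The optimal values of the multiple- and single-counting zone tariff design problems
with arbitrary zones are incomparable, even on trees: on the path graph on four vertices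
with OD pairs (v_1,v_2), (v_2,v_3), (v_3,v_4), (v_1,v_4), one passenger each, reference
prices 1, 2, 2, 3, unique simple paths and N = 2, we have z*_MA = 0 < z*_SA; on the path
graph on five vertices with OD pairs (v_1,v_2), (v_2,v_3), (v_2,v_4), (v_3,v_5), one
passenger each, reference prices 1, 2, 2, 3, unique simple paths and N = 5, we have
z*_SA = 0 < z*_MA. -/
theorem examples_MA_SA_incomparable :
    (zStar (Finset.univ : Finset (Fin 4)) (![1, 2, 2, 3] : Fin 4 → ℝ) (fun _ => 1)
        ![([0, 1] : List (Fin 4)), [1, 2], [2, 3], [0, 1, 2, 3]] sigmaM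
        (fun Z => IsZonePartition Z ∧ Z.card ≤ 2) = 0 ∧
      zStar (Finset.univ : Finset (Fin 4)) (![1, 2, 2, 3] : Fin 4 → ℝ) (fun _ => 1)
        ![([0, 1] : List (Fin 4)), [1, 2], [2, 3], [0, 1, 2, 3]] sigmaM
        (fun Z => IsZonePartition Z ∧ Z.card ≤ 2) <
      zStar (Finset.univ : Finset (Fin 4)) (![1, 2, 2, 3] : Fin 4 → ℝ) (fun _ => 1)
        ![([0, 1] : List (Fin 4)), [1, 2], [2, 3], [0, 1, 2, 3]] sigmaS
        (fun Z => IsZonePartition Z ∧ Z.card ≤ 2)) ∧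
    (zStar (Finset.univ : Finset (Fin 4)) (![1, 2, 2, 3] : Fin 4 → ℝ) (fun _ => 1)
        ![([0, 1] : List (Fin 5)), [1, 2], [1, 2, 3], [2, 3, 4]] sigmaS
        (fun Z => IsZonePartition Z ∧ Z.card ≤ 5) = 0 ∧
      zStar (Finset.univ : Finset (Fin 4)) (![1, 2, 2, 3] : Fin 4 → ℝ) (fun _ => 1)
        ![([0, 1] : List (Fin 5)), [1, 2], [1, 2, 3], [2, 3, 4]] sigmaS
        (fun Z => IsZonePartition Z ∧ Z.card ≤ 5) <
      zStar (Finset.univ : Finset (Fin 4)) (![1, 2, 2, 3] : Fin 4 → ℝ) (fun _ => 1)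
        ![([0, 1] : List (Fin 5)), [1, 2], [1, 2, 3], [2, 3, 4]] sigmaM
        (fun Z => IsZonePartition Z ∧ Z.card ≤ 5)) :=
  ⟨⟨zStar_sigmaM_odPaths4_eq_zero,
      zStar_sigmaM_odPaths4_eq_zero.trans_lt (zero_lt_one.trans_le one_le_zStar_sigmaS_odPaths4)⟩,
    zStar_sigmaS_odPaths5_eq_zero,
      zStar_sigmaS_odPaths5_eq_zero.trans_lt (zero_lt_one.trans_le one_le_zStar_sigmaM_odPaths5)⟩
end
end
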